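/- arXiv:1407.5219 — 7 statements merged into one kernel-verified Lean document; each statement's English description precedes it below -/
import Mathlib

section
/- Let Q ⊆ ℝ^{n-1} × ℝ be a closed set and π : ℝ^{n-1} × ℝ → ℝ^{n-1} the coordinate projection (x,y) ↦ x. Suppose there is a polynomial f(x,y) monic in y of degree s ≥ 1 such that for every point (x,y) ∈ Q, either f(x,y) = 0 or the entire line {(x, t) : t ∈ ℝ} is contained in Q. Then π(Q) is closed in ℝ^{n-1}. -/
open Polynomial Finset

/-!
By Cauchy's bound, a root `y` of `f(x, ·)` satisfies `|y| < B x := 1 + ∑ i < s, |aᵢ(x)|`, where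
the `aᵢ` are the lower coefficients of `f`; on a vertical line in `Q` one may take `y = 0`. So every
fibre of `Q` over `π(Q)` meets the band `|y| ≤ B x`, and `B` is continuous. Rescaling
`y = t · B x` turns this band into `ℝ^{n-1} × [-1, 1]`, whose projection is a closed map.
-/

theorem Polynomial.Monic.norm_lt_one_add_sum_of_isRoot {K : Type*} [NormedDivisionRing K]
    {p : K[X]} (hp : p.Monic) {a : K} (ha : p.IsRoot a) :
    ‖a‖ < 1 + ∑ i ∈ range p.natDegree, ‖p.coeff i‖ := by
  have hsup : (range p.natDegree).sup (‖p.coeff ·‖₊) ≤ ∑ i ∈ range p.natDegree, ‖p.coeff i‖₊ :=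
    Finset.sup_le fun i hi => single_le_sum (f := (‖p.coeff ·‖₊)) (fun j _ => zero_le) hi
  have hroot : ‖a‖₊ < cauchyBound p := ha.norm_lt_cauchyBound hp.ne_zero
  rw [cauchyBound, hp.leadingCoeff, nnnorm_one, div_one] at hroot
  have : ‖a‖₊ < 1 + ∑ i ∈ range p.natDegree, ‖p.coeff i‖₊ := by
    rw [add_comm]
    exact hroot.trans_le (by gcongr)
  simpa only [← NNReal.coe_lt_coe, NNReal.coe_add, NNReal.coe_one, NNReal.coe_sum,
    coe_nnnorm] using this

theorem isClosed_image_fst_of_forall_exists_abs_le {X : Type*} [TopologicalSpace X]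
    {Q : Set (X × ℝ)} (hQ : IsClosed Q) {B : X → ℝ} (hB : Continuous B)
    (hbound : ∀ q ∈ Q, ∃ y, (q.1, y) ∈ Q ∧ |y| ≤ B q.1) :
    IsClosed (Prod.fst '' Q) := by
  let ψ : X × Set.Icc (-1 : ℝ) 1 → X × ℝ := fun p => (p.1, p.2 * B p.1)
  have hψ : Continuous ψ := by fun_prop
  have himage : Prod.fst '' (ψ ⁻¹' Q) = Prod.fst '' Q := by
    apply subset_antisymm
    · rintro _ ⟨p, hp, rfl⟩
      exact ⟨ψ p, hp, rfl⟩
    · rintro _ ⟨q, hq, rfl⟩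
      obtain ⟨y, hyQ, hy⟩ := hbound q hq
      have hB0 : 0 ≤ B q.1 := (abs_nonneg y).trans hy
      have ht : |y / B q.1| ≤ 1 := by
        rw [abs_div, abs_of_nonneg hB0]
        exact div_le_one_of_le₀ hy hB0
      refine ⟨(q.1, ⟨y / B q.1, abs_le.mp ht⟩), ?_, rfl⟩
      have hψy : y / B q.1 * B q.1 = y :=
        div_mul_cancel_of_imp fun h => abs_nonpos_iff.mp (h ▸ hy)
      simpa [ψ, hψy] using hyQ
  rw [← himage]
  exact isClosedMap_fst_of_compactSpace _ (hQ.preimage hψ)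

theorem projection_closed_of_monic_polynomial_general
    (m : ℕ) (Q : Set ((Fin m → ℝ) × ℝ)) (hQ : IsClosed Q)
    (P : Polynomial (MvPolynomial (Fin m) ℝ)) (hmonic : P.Monic)
    (hP : ∀ q ∈ Q, Polynomial.eval q.2 (P.map (MvPolynomial.eval q.1)) = 0 ∨
      ∀ t : ℝ, (q.1, t) ∈ Q) :
    IsClosed (Prod.fst '' Q) := by
  have hB : Continuous fun x => 1 + ∑ i ∈ range P.natDegree, |MvPolynomial.eval x (P.coeff i)| :=
    continuous_const.add <| continuous_finsetSum _ fun i _ => (MvPolynomial.continuous_eval _).abs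
  refine isClosed_image_fst_of_forall_exists_abs_le hQ hB fun q hq => ?_
  rcases hP q hq with hroot | hline
  · refine ⟨q.2, hq, le_of_lt ?_⟩
    have := (hmonic.map (MvPolynomial.eval q.1)).norm_lt_one_add_sum_of_isRoot hroot
    simpa [hmonic.natDegree_map, coeff_map] using this
  · refine ⟨0, hline 0, ?_⟩
    rw [abs_zero]
    positivity

/-- If `Q` is closed and every point of `Q` is either a zero of a polynomial that is
monic in the last variable, or lies on a vertical line contained in `Q`, then the
image of `Q` under the projection forgetting the last coordinate is closed. -/
theorem projection_closed_of_monic_polynomial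
    (m : ℕ) (Q : Set ((Fin m → ℝ) × ℝ)) (hQ : IsClosed Q)
    (P : Polynomial (MvPolynomial (Fin m) ℝ)) (hmonic : P.Monic) (hdeg : 1 ≤ P.natDegree)
    (hP : ∀ q ∈ Q, Polynomial.eval q.2 (P.map (MvPolynomial.eval q.1)) = 0 ∨
      ∀ t : ℝ, (q.1, t) ∈ Q) :
    IsClosed (Prod.fst '' Q) :=
  projection_closed_of_monic_polynomial_general m Q hQ P hmonic hP
end

section
/- For all integers n ≥ 2 and p with 0 ≤ p ≤ C(n+1,2) − 2, there exists an integer r with 1 ≤ r ≤ n−1 satisfying both C(n−r+1, 2) ≤ p+1 and C(r+1, 2) ≤ C(n+1, 2) − (p+1); i.e. the Pataki range is nonempty. -/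
/-! Take `k ≤ n - 1` maximal with `C(k+1,2) ≤ p+1` and `r = n - k`. The first inequality holds by
choice of `k`. For the second, if `k < n - 1` then `p + 1 < C(k+2,2)`, and splitting
`C(n+1,2) = C(k+2,2) + C(r,2) + (k+1)(r-1)` leaves room for `C(r+1,2) = C(r,2) + r`; if
`k = n - 1` it is just `p + 2 ≤ C(n+1,2)`. -/

theorem Nat.choose_two_add_add_one (a b : ℕ) :
    (a + b + 1).choose 2 = (a + 1).choose 2 + (b + 1).choose 2 + a * b := by
  induction b with
  | zero => simp
  | succ b ih =>
    rw [show a + (b + 1) + 1 = a + b + 1 + 1 by ring, Nat.choose_succ_succ', ih,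
      Nat.choose_succ_succ' (b + 1), Nat.choose_one_right, Nat.choose_one_right]
    ring

theorem Nat.choose_two_sub_add_le {n k m : ℕ} (hk : k < n) (hm : m < (k + 2).choose 2) :
    (n - k + 1).choose 2 + m ≤ (n + 1).choose 2 := by
  obtain ⟨s, rfl⟩ : ∃ s, n = k + s + 1 := ⟨n - k - 1, by omega⟩
  have hsplit : (k + s + 1 + 1).choose 2 = (k + 2).choose 2 + (s + 1).choose 2 + (k + 1) * s := by
    rw [← Nat.choose_two_add_add_one]; ring_nf
  rw [hsplit, show k + s + 1 - k + 1 = s + 1 + 1 by omega, Nat.choose_succ_succ' (s + 1),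
    Nat.choose_one_right]
  nlinarith [Nat.le_mul_of_pos_left s k.succ_pos]

theorem Nat.exists_le_and_not_succ {P : ℕ → Prop} [DecidablePred P] {a N : ℕ} (ha : a ≤ N)
    (hPa : P a) : ∃ k, a ≤ k ∧ k ≤ N ∧ P k ∧ (k < N → ¬ P (k + 1)) :=
  ⟨Nat.findGreatest P N, Nat.le_findGreatest ha hPa, Nat.findGreatest_le N,
    Nat.findGreatest_spec ha hPa, fun hk => Nat.findGreatest_is_greatest (Nat.lt_succ_self _) hk⟩

/-- The Pataki range is nonempty for all `n ≥ 2` and `0 ≤ p ≤ C(n+1,2) - 2`. -/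
theorem pataki_range_nonempty (n p : ℕ) (hn : 2 ≤ n) (hp : p ≤ Nat.choose (n + 1) 2 - 2) :
    ∃ r : ℕ, 1 ≤ r ∧ r ≤ n - 1 ∧
      Nat.choose (n - r + 1) 2 ≤ p + 1 ∧
      Nat.choose (r + 1) 2 ≤ Nat.choose (n + 1) 2 - (p + 1) := by
  have hC : 3 ≤ (n + 1).choose 2 := Nat.choose_le_choose 2 (by omega : 3 ≤ n + 1)
  obtain ⟨k, hk1, hkn, hPk, hmax⟩ :=
    Nat.exists_le_and_not_succ (P := fun k => (k + 1).choose 2 ≤ p + 1) (by omega : 1 ≤ n - 1)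
      (by simp)
  refine ⟨n - k, by omega, by omega, by rwa [Nat.sub_sub_self (by omega)], ?_⟩
  rw [Nat.le_sub_iff_add_le (by omega)]
  rcases hkn.lt_or_eq with hk | rfl
  · exact Nat.choose_two_sub_add_le (by omega) (Nat.lt_of_not_le (hmax hk))
  · rw [Nat.sub_sub_self (by omega), Nat.choose_self]
    omega
end

section
/- Let A(x_1,x_2,y) be the 4×4 symmetric matrix with rows (1, x_1, x_2, y), (x_1, 1, y, x_2), (x_2, y, 1, x_1), (y, x_2, x_1, 1). The spectrahedron Q = {(x_1,x_2,y) ∈ ℝ³ : A(x_1,x_2,y) ⪰ 0} equals the tetrahedron that is the convex hull of the four points (1,1,1), (1,−1,−1), (−1,1,−1), (−1,−1,1). -/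
/-!
`A(v)` is the image of `1 + v₀ a + v₁ b + v₂ ab` under the regular representation of the Klein
four-group `{1, a, b, ab}`, so it is diagonalised by the characters, i.e. by the Hadamard vectors
`(1, tᵢ)` where `tᵢ` runs over the four vertices of the tetrahedron; the eigenvalue on `(1, tᵢ)`
is `1 + ⟪tᵢ, v⟫`. The tetrahedron is self-polar (`⟪tᵢ, tⱼ⟫ = -1` for `i ≠ j`), so these same
numbers, divided by `4`, are the barycentric coordinates of `v`. Hence both sets are cut out by
the four inequalities `0 ≤ 1 + ⟪tᵢ, v⟫`.
-/

open Matrix Set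

namespace CirculantSpectrahedron

def vertex : Fin 4 → Fin 3 → ℝ := ![![1, 1, 1], ![1, -1, -1], ![-1, 1, -1], ![-1, -1, 1]]

def hadamard (i : Fin 4) : Fin 4 → ℝ := vecCons 1 (vertex i)

def pencil (v : Fin 3 → ℝ) : Matrix (Fin 4) (Fin 4) ℝ :=
  Matrix.of ![![1, v 0, v 1, v 2], ![v 0, 1, v 2, v 1], ![v 1, v 2, 1, v 0], ![v 2, v 1, v 0, 1]]

lemma pencil_eq_sum (v : Fin 3 → ℝ) :
    pencil v = ∑ i, ((1 + vertex i ⬝ᵥ v) / 4) • vecMulVec (hadamard i) (hadamard i) := by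
  ext a b
  fin_cases a <;> fin_cases b <;>
    simp [pencil, hadamard, vertex, Fin.sum_univ_four, Fin.sum_univ_three, dotProduct, vecMulVec,
      vecHead, vecTail] <;> ring

lemma pencil_mulVec_hadamard (v : Fin 3 → ℝ) (i : Fin 4) :
    pencil v *ᵥ hadamard i = (1 + vertex i ⬝ᵥ v) • hadamard i := by
  ext a
  fin_cases i <;> fin_cases a <;>
    simp [pencil, hadamard, vertex, Fin.sum_univ_four, Fin.sum_univ_three, dotProduct,
      mulVec] <;> ring

lemma hadamard_dotProduct_self (i : Fin 4) : hadamard i ⬝ᵥ hadamard i = 4 := by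
  fin_cases i <;> simp [hadamard, vertex, dotProduct, Fin.sum_univ_four] <;> norm_num

theorem posSemidef_pencil_iff (v : Fin 3 → ℝ) :
    (pencil v).PosSemidef ↔ ∀ i, 0 ≤ 1 + vertex i ⬝ᵥ v := by
  refine ⟨fun h i => ?_, fun h => ?_⟩
  · have hquad := h.dotProduct_mulVec_nonneg (hadamard i)
    rw [pencil_mulVec_hadamard, star_trivial, dotProduct_smul, hadamard_dotProduct_self,
      smul_eq_mul] at hquad
    linarith
  · rw [pencil_eq_sum]
    refine posSemidef_sum _ fun i _ => .smul ?_ (by linarith [h i])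
    simpa using posSemidef_vecMulVec_self_star (hadamard i)

lemma sum_barycentric_smul_vertex (v : Fin 3 → ℝ) :
    ∑ i, ((1 + vertex i ⬝ᵥ v) / 4) • vertex i = v := by
  ext a
  fin_cases a <;> simp [vertex, Fin.sum_univ_four, Fin.sum_univ_three, dotProduct] <;> ring

theorem convexHull_range_vertex :
    convexHull ℝ (range vertex) = {v | ∀ i, 0 ≤ 1 + vertex i ⬝ᵥ v} := by
  refine subset_antisymm (convexHull_min ?_ ?_) fun v hv => ?_
  · rintro _ ⟨j, rfl⟩ i
    fin_cases i <;> fin_cases j <;> simp [vertex, dotProduct, Fin.sum_univ_three] <;> norm_num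
  · intro x hx y hy a b ha hb hab i
    have hcomb := add_nonneg (mul_nonneg ha (hx i)) (mul_nonneg hb (hy i))
    simp only [dotProduct_add, dotProduct_smul, smul_eq_mul]
    linear_combination hcomb + hab
  · rw [← sum_barycentric_smul_vertex v]
    refine (convex_convexHull ℝ _).sum_mem (fun i _ => by linarith [hv i]) ?_
      fun i _ => subset_convexHull ℝ _ (mem_range_self i)
    simp only [vertex, dotProduct, Fin.sum_univ_four, Fin.sum_univ_three, cons_val',
      cons_val_fin_one, cons_val_zero, cons_val_one, cons_val, one_mul, neg_mul]
    ring

lemma range_vertex : range vertex =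
    {![1, 1, 1], ![1, -1, -1], ![(-1 : ℝ), 1, -1], ![(-1 : ℝ), -1, 1]} := by
  ext x
  simp only [vertex, range_cons, range_empty, union_empty, union_singleton, union_insert,
    mem_insert_iff, mem_singleton_iff]
  tauto

end CirculantSpectrahedron

open CirculantSpectrahedron in
/-- The spectrahedron of the circulant pencil is the tetrahedron with vertices
`(1,1,1), (1,-1,-1), (-1,1,-1), (-1,-1,1)`. -/
theorem circulant_spectrahedron_is_tetrahedron :
    {v : Fin 3 → ℝ |
        (Matrix.of ![![1, v 0, v 1, v 2], ![v 0, 1, v 2, v 1],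
          ![v 1, v 2, 1, v 0], ![v 2, v 1, v 0, 1]]).PosSemidef} =
    convexHull ℝ {![1, 1, 1], ![1, -1, -1], ![(-1 : ℝ), 1, -1], ![(-1 : ℝ), -1, 1]} := by
  rw [← range_vertex, convexHull_range_vertex]
  exact Set.ext fun v => posSemidef_pencil_iff v
end

section
/- Let A(x_1,x_2,y) be the 4×4 symmetric matrix with rows (1, x_1, x_2, y), (x_1, 1, y, x_2), (x_2, y, 1, x_1), (y, x_2, x_1, 1). The image of the spectrahedron {(x_1,x_2,y) : A ⪰ 0} under the projection (x_1,x_2,y) ↦ (x_1,x_2) is the square [−1,1] × [−1,1]. -/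
/-! The matrix is the group matrix of the Klein four-group `ℤ/2 × ℤ/2`, so the characters of that
group — the rows of the `4 × 4` Hadamard matrix — diagonalize it, with eigenvalues
`1 ± x₁ ± x₂ ± y` (an even number of minus signs). Hence `A ⪰ 0` forces `1 ± x₁ ≥ 0` and
`1 ± x₂ ≥ 0` (add two eigenvalues), and conversely `y = x₁ x₂` turns the eigenvalues into the
products `(1 ± x₁)(1 ± x₂)`, which are nonnegative on the square. -/

open Matrix Set

def kleinFourMatrix (x₁ x₂ y : ℝ) : Matrix (Fin 4) (Fin 4) ℝ :=
  of ![![1, x₁, x₂, y], ![x₁, 1, y, x₂], ![x₂, y, 1, x₁], ![y, x₂, x₁, 1]]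

namespace kleinFourMatrix

variable {x₁ x₂ y : ℝ}

theorem isHermitian : (kleinFourMatrix x₁ x₂ y).IsHermitian := by
  ext i j
  fin_cases i <;> fin_cases j <;> rfl

theorem four_mul_dotProduct_mulVec (z : Fin 4 → ℝ) :
    4 * (z ⬝ᵥ kleinFourMatrix x₁ x₂ y *ᵥ z) =
      (1 + x₁ + x₂ + y) * (z 0 + z 1 + z 2 + z 3) ^ 2 +
      (1 + x₁ - x₂ - y) * (z 0 + z 1 - z 2 - z 3) ^ 2 +
      (1 - x₁ + x₂ - y) * (z 0 - z 1 + z 2 - z 3) ^ 2 +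
      (1 - x₁ - x₂ + y) * (z 0 - z 1 - z 2 + z 3) ^ 2 := by
  simp only [dotProduct, mulVec, kleinFourMatrix, of_apply, cons_val', cons_val_fin_one,
    Fin.sum_univ_four, Fin.isValue, cons_val_zero, cons_val_one, cons_val, one_mul]
  ring

theorem posSemidef_iff :
    (kleinFourMatrix x₁ x₂ y).PosSemidef ↔
      0 ≤ 1 + x₁ + x₂ + y ∧ 0 ≤ 1 + x₁ - x₂ - y ∧ 0 ≤ 1 - x₁ + x₂ - y ∧ 0 ≤ 1 - x₁ - x₂ + y := by
  constructor
  · intro hA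
    have form_nonneg (z : Fin 4 → ℝ) : 0 ≤ 4 * (z ⬝ᵥ kleinFourMatrix x₁ x₂ y *ᵥ z) := by
      simpa using hA.dotProduct_mulVec_nonneg z
    have h₁ := form_nonneg ![1, 1, 1, 1]
    have h₂ := form_nonneg ![1, 1, -1, -1]
    have h₃ := form_nonneg ![1, -1, 1, -1]
    have h₄ := form_nonneg ![1, -1, -1, 1]
    simp only [four_mul_dotProduct_mulVec, cons_val_zero, cons_val_one, cons_val_two,
      cons_val_three] at h₁ h₂ h₃ h₄
    norm_num at h₁ h₂ h₃ h₄
    exact ⟨by linarith, by linarith, by linarith, by linarith⟩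
  · rintro ⟨h₁, h₂, h₃, h₄⟩
    refine posSemidef_iff_dotProduct_mulVec.mpr ⟨isHermitian, fun z => ?_⟩
    have hz := four_mul_dotProduct_mulVec (x₁ := x₁) (x₂ := x₂) (y := y) z
    simp only [star_trivial]
    linarith [mul_nonneg h₁ (sq_nonneg (z 0 + z 1 + z 2 + z 3)),
      mul_nonneg h₂ (sq_nonneg (z 0 + z 1 - z 2 - z 3)),
      mul_nonneg h₃ (sq_nonneg (z 0 - z 1 + z 2 - z 3)),
      mul_nonneg h₄ (sq_nonneg (z 0 - z 1 - z 2 + z 3))]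

theorem posSemidef_of_mem_Icc (h₁ : x₁ ∈ Icc (-1) 1) (h₂ : x₂ ∈ Icc (-1) 1) :
    (kleinFourMatrix x₁ x₂ (x₁ * x₂)).PosSemidef := by
  obtain ⟨h₁l, h₁u⟩ := h₁
  obtain ⟨h₂l, h₂u⟩ := h₂
  refine posSemidef_iff.mpr ⟨?_, ?_, ?_, ?_⟩
  · linarith [mul_nonneg (neg_le_iff_add_nonneg'.mp h₁l) (neg_le_iff_add_nonneg'.mp h₂l)]
  · linarith [mul_nonneg (neg_le_iff_add_nonneg'.mp h₁l) (sub_nonneg.mpr h₂u)]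
  · linarith [mul_nonneg (sub_nonneg.mpr h₁u) (neg_le_iff_add_nonneg'.mp h₂l)]
  · linarith [mul_nonneg (sub_nonneg.mpr h₁u) (sub_nonneg.mpr h₂u)]

end kleinFourMatrix

/-- The projection of the circulant spectrahedron to the `(x₁,x₂)`-plane is the
square `[-1,1] × [-1,1]`. -/
theorem circulant_spectrahedron_projects_to_square :
    (fun v : Fin 3 → ℝ => ![v 0, v 1]) ''
      {v : Fin 3 → ℝ |
        (Matrix.of ![![1, v 0, v 1, v 2], ![v 0, 1, v 2, v 1],
          ![v 1, v 2, 1, v 0], ![v 2, v 1, v 0, 1]]).PosSemidef} =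
    {w : Fin 2 → ℝ | -1 ≤ w 0 ∧ w 0 ≤ 1 ∧ -1 ≤ w 1 ∧ w 1 ≤ 1} := by
  ext w
  constructor
  · rintro ⟨v, hv, rfl⟩
    obtain ⟨h₁, h₂, h₃, h₄⟩ :=
      (kleinFourMatrix.posSemidef_iff (x₁ := v 0) (x₂ := v 1) (y := v 2)).mp hv
    simp only [mem_ofPred_eq, cons_val_zero, cons_val_one]
    exact ⟨by linarith, by linarith, by linarith, by linarith⟩
  · rintro ⟨h₁l, h₁u, h₂l, h₂u⟩
    refine ⟨![w 0, w 1, w 0 * w 1],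
      kleinFourMatrix.posSemidef_of_mem_Icc ⟨h₁l, h₁u⟩ ⟨h₂l, h₂u⟩, ?_⟩
    ext i
    fin_cases i <;> rfl
end

section
/- Let A(x_1,x_2,y) be the 4×4 symmetric matrix with rows (1, x_1, x_2, y), (x_1, 1, y, x_2), (x_2, y, 1, x_1), (y, x_2, x_1, 1), and let f = det A. Then the resultant of f and ∂f/∂y with respect to y equals, up to a nonzero constant factor, the polynomial (x_1−1)²(x_1+1)²(x_2−1)²(x_2+1)²(x_1−x_2)²(x_1+x_2)². -/
/-!
`A` is the group matrix of the Klein four-group, so `f = det A` is the product of the four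
character sums `1 ± x₁ ± x₂ ± y`; as a polynomial in `y` it is monic and splits with roots
`-(1 + x₁ + x₂)`, `1 + x₁ - x₂`, `1 - x₁ + x₂`, `x₁ + x₂ - 1`. For a monic split polynomial,
`Res(f, f') = ∏ᵢ f'(rᵢ) = ∏_{i ≠ j} (rᵢ - rⱼ)`, and the six root differences are `±2` times
`1 ± x₁`, `1 ± x₂`, `x₁ ± x₂`, which gives the constant `2¹² = 4096`.
-/

open MvPolynomial

/-- The Sylvester matrix of two polynomials `f`, `g`, regarded as having
degrees `m` and `n` respectively. -/
def sylvesterMatrix {R : Type*} [CommRing R] (f g : Polynomial R) (m n : ℕ) :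
    Matrix (Fin (n + m)) (Fin (n + m)) R :=
  Matrix.of fun i j =>
    if (i : ℕ) < n then
      (if (i : ℕ) ≤ (j : ℕ) ∧ (j : ℕ) ≤ (i : ℕ) + m then f.coeff (m + i - j) else 0)
    else
      (if (i : ℕ) - n ≤ (j : ℕ) ∧ (j : ℕ) ≤ ((i : ℕ) - n) + n then
        g.coeff (n + ((i : ℕ) - n) - j) else 0)

/-- The resultant of two polynomials with respect to the given degrees. -/
def resultant {R : Type*} [CommRing R] (f g : Polynomial R) (m n : ℕ) : R :=
  (sylvesterMatrix f g m n).det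

theorem sylvesterMatrix_eq_transpose_reindex_sylvester {R : Type*} [CommRing R]
    (f g : Polynomial R) (m n : ℕ) :
    sylvesterMatrix f g m n =
      ((Polynomial.sylvester f g m n).reindex (Fin.revPerm.trans (finCongr (add_comm m n)))
        (Fin.revPerm.trans (finCongr (add_comm m n)))).transpose := by
  ext ⟨i, hi⟩ ⟨j, hj⟩
  simp only [sylvesterMatrix, Matrix.transpose_apply, Matrix.reindex_apply,
    Matrix.submatrix_apply, Polynomial.sylvester, Matrix.of_apply, Equiv.symm_trans_apply,
    finCongr_symm, finCongr_apply, Fin.revPerm_symm, Fin.revPerm_apply]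
  by_cases hin : i < n
  · have hrev :
        Fin.rev (Fin.cast (add_comm n m) ⟨i, hi⟩) = Fin.natAdd m ⟨n - 1 - i, by omega⟩ := by
      ext; simp only [Fin.cast_mk, Fin.val_rev, Fin.natAdd_mk]; omega
    rw [hrev, Fin.addCases_right]
    simp only [if_pos hin, Fin.val_rev, Fin.val_cast, Set.mem_Icc]
    congr 1
    · exact propext (by omega)
    · congr 1; omega
  · have hrev :
        Fin.rev (Fin.cast (add_comm n m) ⟨i, hi⟩) = Fin.castAdd n ⟨m - 1 - (i - n), by omega⟩ := by
      ext; simp only [Fin.cast_mk, Fin.val_rev, Fin.castAdd_mk]; omega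
    rw [hrev, Fin.addCases_left]
    simp only [if_neg hin, Fin.val_rev, Fin.val_cast, Set.mem_Icc]
    congr 1
    · exact propext (by omega)
    · congr 1; omega

theorem resultant_eq_polynomial_resultant {R : Type*} [CommRing R] (f g : Polynomial R)
    (m n : ℕ) : resultant f g m n = Polynomial.resultant f g m n := by
  rw [resultant, sylvesterMatrix_eq_transpose_reindex_sylvester, Matrix.det_transpose,
    Matrix.det_reindex_self, Polynomial.resultant]

theorem Fin.prod_univ_erase {M : Type*} [CommMonoid M] {n : ℕ} (f : Fin (n + 1) → M)
    (i : Fin (n + 1)) : ∏ j ≠ i, f j = ∏ j : Fin n, f (i.succAbove j) := by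
  rw [Fin.univ_succAbove n i, Finset.erase_cons, Finset.prod_map, Fin.coe_succAboveEmb]

namespace Polynomial

variable {R ι : Type*} [CommRing R] [Fintype ι]

theorem natDegree_prod_X_sub_C [Nontrivial R] (r : ι → R) :
    (∏ i, (X - C (r i))).natDegree = Fintype.card ι := by
  rw [natDegree_prod_of_monic _ _ fun i _ => monic_X_sub_C (r i)]
  simp

theorem resultant_prod_X_sub_C_left (r : ι → R) (g : R[X]) {n : ℕ} (hg : g.natDegree ≤ n) :
    (∏ i, (X - C (r i))).resultant g (Fintype.card ι) n = ∏ i, g.eval (r i) := by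
  nontriviality R
  rw [← natDegree_prod_X_sub_C r, resultant_prod_left _ _ _ _ (by simp) hg]
  exact Finset.prod_congr rfl fun i _ => by
    rw [natDegree_X_sub_C, resultant_X_sub_C_left _ _ _ hg]

variable [DecidableEq ι]

theorem eval_derivative_prod_X_sub_C (r : ι → R) (i : ι) :
    (derivative (∏ j, (X - C (r j)))).eval (r i) = ∏ j ≠ i, (r i - r j) := by
  rw [derivative_prod_finset, eval_finsetSum, Finset.sum_eq_single i]
  · simp [eval_prod]
  · intro j _ hji
    have hi : i ∈ Finset.univ.erase j := Finset.mem_erase.2 ⟨Ne.symm hji, Finset.mem_univ i⟩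
    rw [eval_mul, eval_prod, Finset.prod_eq_zero hi (by simp), zero_mul]
  · simp

theorem resultant_prod_X_sub_C_derivative (r : ι → R) :
    (∏ i, (X - C (r i))).resultant (derivative (∏ i, (X - C (r i))))
      (Fintype.card ι) (Fintype.card ι - 1) =
      ∏ i, ∏ j ≠ i, (r i - r j) := by
  nontriviality R
  rw [resultant_prod_X_sub_C_left]
  · simp_rw [eval_derivative_prod_X_sub_C]
  · exact (natDegree_derivative_le _).trans (by rw [natDegree_prod_X_sub_C])

end Polynomial

theorem det_kleinFour {R : Type*} [CommRing R] (a b y : R) :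
    (Matrix.of ![![1, a, b, y], ![a, 1, y, b], ![b, y, 1, a], ![y, b, a, 1]]).det =
      (1 + a + b + y) * (1 + a - b - y) * (1 - a + b - y) * (1 - a - b + y) := by
  rw [Matrix.det_succ_row_zero, Fin.sum_univ_four]
  simp only [Matrix.det_fin_three, Matrix.submatrix_apply, Matrix.of_apply, Matrix.cons_val,
    Fin.succAbove, Fin.reduceSucc, Fin.reduceCastSucc, Fin.reduceLT, ↓reduceIte,
    Fin.coe_ofNat_eq_mod]
  ring

theorem det_kleinFour_eq_prod_X_sub_C {R : Type*} [CommRing R] (a b : R) :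
    (Matrix.of ![![1, Polynomial.C a, Polynomial.C b, Polynomial.X],
      ![Polynomial.C a, 1, Polynomial.X, Polynomial.C b],
      ![Polynomial.C b, Polynomial.X, 1, Polynomial.C a],
      ![Polynomial.X, Polynomial.C b, Polynomial.C a, 1]]).det =
      ∏ i, (Polynomial.X -
        Polynomial.C (![-(1 + a + b), 1 + a - b, 1 - a + b, a + b - 1] i)) := by
  rw [det_kleinFour, Fin.prod_univ_four]
  simp only [Matrix.cons_val, map_add, map_sub, map_neg, map_one]
  ring

/-- The resultant with respect to `y` of `f = det A(x₁,x₂,y)` and `∂f/∂y`, where `A`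
is the circulant pencil, equals a nonzero constant times
`(x₁-1)²(x₁+1)²(x₂-1)²(x₂+1)²(x₁-x₂)²(x₁+x₂)²`. -/
theorem resultant_of_circulant_det :
    ∃ c : ℝ, c ≠ 0 ∧
      (let x₁ : Polynomial (MvPolynomial (Fin 2) ℝ) := Polynomial.C (X 0)
       let x₂ : Polynomial (MvPolynomial (Fin 2) ℝ) := Polynomial.C (X 1)
       let y : Polynomial (MvPolynomial (Fin 2) ℝ) := Polynomial.X
       let f := (Matrix.of ![![1, x₁, x₂, y], ![x₁, 1, y, x₂],
          ![x₂, y, 1, x₁], ![y, x₂, x₁, 1]]).det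
       resultant f (Polynomial.derivative f) 4 3) =
      MvPolynomial.C c *
        ((X 0 - 1) ^ 2 * (X 0 + 1) ^ 2 * (X 1 - 1) ^ 2 * (X 1 + 1) ^ 2 *
          (X 0 - X 1) ^ 2 * (X 0 + X 1) ^ 2) := by
  refine ⟨4096, by norm_num, ?_⟩
  dsimp only
  rw [det_kleinFour_eq_prod_X_sub_C, resultant_eq_polynomial_resultant]
  refine (Polynomial.resultant_prod_X_sub_C_derivative _).trans ?_
  simp only [Fin.prod_univ_four, Fin.prod_univ_erase, Fin.prod_univ_three, Fin.succAbove,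
    Fin.reduceCastSucc, Fin.reduceSucc, Fin.reduceLT, Matrix.cons_val, ↓reduceIte, map_ofNat]
  ring
end

section
/- Let A be the 3×3 symmetric matrix with rows (y_1, x_1, x_2), (x_1, y_2, −x_1 − (6/5)x_2 − 7/10), (x_2, −x_1 − (6/5)x_2 − 7/10, 2 − y_1 − y_2). If all 2×2 minors of A vanish at a point (x_1, x_2, y_1, y_2) ∈ ℝ⁴, then 100x_1⁴ + 240x_1³x_2 + 344x_1²x_2² + 240x_1x_2³ + 144x_2⁴ + 140x_1³ + 368x_1²x_2 + 380x_1x_2² + 168x_2³ + 49x_1² + 140x_1x_2 + 49x_2² = 0. -/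
/-!
A symmetric rank-one matrix with off-diagonal entries `p, q, r` has diagonal
`pq/r, pr/q, qr/p` (when these make sense). Multiplying the trace by `pqr` gives a
polynomial relation between the trace and the off-diagonal entries alone, which follows
from three of the minors. For `A` the trace is `2` and `r` is the affine entry
`-x₁ - (6/5) x₂ - 7/10`, and the relation, times `100`, is the quartic.
-/

theorem sq_add_sq_add_sq_eq_trace_mul_of_minors_eq_zero {R : Type*} [CommRing R]
    {a b c p q r : R} {A : Matrix (Fin 3) (Fin 3) R} (hA : A = !![a, p, q; p, b, r; q, r, c])
    (hminors : ∀ i j k l : Fin 3, A i j * A k l - A i l * A k j = 0) :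
    (p * q) ^ 2 + (p * r) ^ 2 + (q * r) ^ 2 = (a + b + c) * (p * q * r) := by
  subst hA
  have hb : p * r - q * b = 0 := by simpa using hminors 0 1 1 2
  have ha : a * r - q * p = 0 := by simpa using hminors 0 0 1 2
  have hc : p * c - q * r = 0 := by simpa using hminors 0 1 2 2
  linear_combination (p * r) * hb - (p * q) * ha - (q * r) * hc

/-- If all 2×2 minors of the matrix `A` of Example 3.3 vanish at a point, then the
quartic equation of the projected rank-one locus holds. -/
theorem rank_one_locus_quartic (x₁ x₂ y₁ y₂ : ℝ)
    (A : Matrix (Fin 3) (Fin 3) ℝ)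
    (hA : A = Matrix.of ![![y₁, x₁, x₂],
      ![x₁, y₂, -x₁ - (6/5) * x₂ - 7/10],
      ![x₂, -x₁ - (6/5) * x₂ - 7/10, 2 - y₁ - y₂]])
    (hminors : ∀ i j k l : Fin 3, A i j * A k l - A i l * A k j = 0) :
    100*x₁^4 + 240*x₁^3*x₂ + 344*x₁^2*x₂^2 + 240*x₁*x₂^3 + 144*x₂^4
      + 140*x₁^3 + 368*x₁^2*x₂ + 380*x₁*x₂^2 + 168*x₂^3
      + 49*x₁^2 + 140*x₁*x₂ + 49*x₂^2 = 0 := by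
  have h := sq_add_sq_add_sq_eq_trace_mul_of_minors_eq_zero hA hminors
  linear_combination 100 * h
end

section
/- Let H be the 4×4 symmetric matrix with rows (1, x_1, x_2, x_1+x_2), (x_1, 1, y_1, y_2), (x_2, y_1, 1, y_3), (x_1+x_2, y_2, y_3, 1). If H ⪰ 0 for some (y_1,y_2,y_3) ∈ ℝ³, then |x_1| ≤ 1, |x_2| ≤ 1, and |x_1 + x_2| ≤ 1. Conversely, each of the six points (−1,1), (−1,0), (0,−1), (1,−1), (1,0), (0,1) admits a choice of (y_1,y_2,y_3) making H ⪰ 0. -/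
/-!
Since the first row of `H` is `(1, x₁, x₂, x₁ + x₂)` and its diagonal is `1`, the `2 × 2` principal
minors on the rows `{0, k}` give `x₁², x₂², (x₁ + x₂)² ≤ 1`. At a vertex of the hexagon each of
`x₁, x₂, x₁ + x₂` lies in `{-1, 0, 1}`, and `H` is completed to the Gram matrix of the vectors
`(c, 1 - c²) ∈ ℝ²`, `c ∈ (1, x₁, x₂, x₁ + x₂)`, which are `±e₁` or `e₂` and so have unit length.
-/

open Matrix

theorem Matrix.PosSemidef.sq_apply_le_mul_diag {n : Type*} [Fintype n] {M : Matrix n n ℝ}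
    (hM : M.PosSemidef) (i j : n) : M i j ^ 2 ≤ M i i * M j j := by
  have hdet := (hM.submatrix ![i, j]).det_nonneg
  have hsymm : M j i = M i j := by simpa using congrFun (congrFun hM.isHermitian.eq i) j
  rw [det_fin_two] at hdet
  simp only [submatrix_apply, Matrix.cons_val_zero, Matrix.cons_val_one, hsymm] at hdet
  linarith

theorem Matrix.PosSemidef.abs_apply_le_one {n : Type*} [Fintype n] {M : Matrix n n ℝ}
    (hM : M.PosSemidef) {i j : n} (hi : M i i = 1) (hj : M j j = 1) : |M i j| ≤ 1 := by
  rw [← sq_le_one_iff_abs_le_one]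
  simpa [hi, hj] using hM.sq_apply_le_mul_diag i j

section SignGram

variable {n : Type*} (c : n → ℝ)

def signGram : Matrix n n ℝ :=
  vecMulVec c c + vecMulVec (1 - c ^ 2) (1 - c ^ 2)

theorem posSemidef_signGram [Fintype n] : (signGram c).PosSemidef := by
  simpa [signGram] using
    (posSemidef_vecMulVec_self_star c).add (posSemidef_vecMulVec_self_star (1 - c ^ 2))

theorem signGram_apply_comm (i j : n) : signGram c i j = signGram c j i := by
  simp only [signGram, Matrix.add_apply, vecMulVec_apply]
  ring

theorem signGram_apply_self {k : n} (hk : c k ∈ ({-1, 0, 1} : Set ℝ)) : signGram c k k = 1 := by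
  simp only [signGram, Matrix.add_apply, vecMulVec_apply, Pi.sub_apply, Pi.one_apply, Pi.pow_apply]
  rcases hk with hk | hk | hk <;> rw [hk] <;> norm_num

theorem signGram_apply_of_eq_one {i : n} (hi : c i = 1) (k : n) : signGram c i k = c k := by
  simp [signGram, vecMulVec_apply, hi]

end SignGram

def hexagonLift (x₁ x₂ y₁ y₂ y₃ : ℝ) : Matrix (Fin 4) (Fin 4) ℝ :=
  Matrix.of ![![1, x₁, x₂, x₁ + x₂], ![x₁, 1, y₁, y₂], ![x₂, y₁, 1, y₃], ![x₁ + x₂, y₂, y₃, 1]]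

theorem abs_le_one_of_posSemidef_hexagonLift {x₁ x₂ y₁ y₂ y₃ : ℝ}
    (h : (hexagonLift x₁ x₂ y₁ y₂ y₃).PosSemidef) :
    |x₁| ≤ 1 ∧ |x₂| ≤ 1 ∧ |x₁ + x₂| ≤ 1 :=
  ⟨h.abs_apply_le_one (i := 0) (j := 1) rfl rfl, h.abs_apply_le_one (i := 0) (j := 2) rfl rfl,
    h.abs_apply_le_one (i := 0) (j := 3) rfl rfl⟩

theorem hexagonLift_eq_of_symm {x₁ x₂ : ℝ} (G : Matrix (Fin 4) (Fin 4) ℝ)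
    (hsymm : ∀ i j, G i j = G j i) (hdiag : ∀ k, G k k = 1)
    (hrow : ∀ k, G 0 k = ![1, x₁, x₂, x₁ + x₂] k) :
    hexagonLift x₁ x₂ (G 1 2) (G 1 3) (G 2 3) = G := by
  ext i j
  fin_cases i <;> fin_cases j <;> simp [hexagonLift, hrow, hdiag, hsymm _ 0, hsymm 2 1, hsymm 3]

theorem exists_posSemidef_hexagonLift {x₁ x₂ : ℝ} (h₁ : x₁ ∈ ({-1, 0, 1} : Set ℝ))
    (h₂ : x₂ ∈ ({-1, 0, 1} : Set ℝ)) (h₃ : x₁ + x₂ ∈ ({-1, 0, 1} : Set ℝ)) :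
    ∃ y₁ y₂ y₃ : ℝ, (hexagonLift x₁ x₂ y₁ y₂ y₃).PosSemidef := by
  set c : Fin 4 → ℝ := ![1, x₁, x₂, x₁ + x₂]
  have hc : ∀ k, c k ∈ ({-1, 0, 1} : Set ℝ) := by
    intro k; fin_cases k <;> simp [c, h₁, h₂, h₃]
  refine ⟨signGram c 1 2, signGram c 1 3, signGram c 2 3, ?_⟩
  rw [hexagonLift_eq_of_symm _ (signGram_apply_comm c) (fun k ↦ signGram_apply_self c (hc k))
    (signGram_apply_of_eq_one c rfl)]
  exact posSemidef_signGram c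

/-- Gouveia's representation of the hexagon (Example 4.2): if `H ⪰ 0` for some
`(y₁,y₂,y₃)` then `|x₁| ≤ 1`, `|x₂| ≤ 1` and `|x₁+x₂| ≤ 1`; conversely each of the
six vertices of the hexagon admits a lift making `H ⪰ 0`. -/
theorem gouveia_hexagon :
    (∀ x₁ x₂ y₁ y₂ y₃ : ℝ,
      (Matrix.of ![![1, x₁, x₂, x₁ + x₂], ![x₁, 1, y₁, y₂],
        ![x₂, y₁, 1, y₃], ![x₁ + x₂, y₂, y₃, 1]]).PosSemidef →
      |x₁| ≤ 1 ∧ |x₂| ≤ 1 ∧ |x₁ + x₂| ≤ 1) ∧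
    (∀ x₁ x₂ : ℝ,
      ((x₁, x₂) = (-1, 1) ∨ (x₁, x₂) = (-1, 0) ∨ (x₁, x₂) = (0, -1) ∨
        (x₁, x₂) = (1, -1) ∨ (x₁, x₂) = (1, 0) ∨ (x₁, x₂) = (0, 1)) →
      ∃ y₁ y₂ y₃ : ℝ,
        (Matrix.of ![![1, x₁, x₂, x₁ + x₂], ![x₁, 1, y₁, y₂],
          ![x₂, y₁, 1, y₃], ![x₁ + x₂, y₂, y₃, 1]]).PosSemidef) := by
  refine ⟨fun x₁ x₂ y₁ y₂ y₃ ↦ abs_le_one_of_posSemidef_hexagonLift, fun x₁ x₂ hx ↦ ?_⟩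
  simp only [Prod.mk.injEq] at hx
  rcases hx with ⟨rfl, rfl⟩ | ⟨rfl, rfl⟩ | ⟨rfl, rfl⟩ | ⟨rfl, rfl⟩ | ⟨rfl, rfl⟩ | ⟨rfl, rfl⟩ <;>
    exact exists_posSemidef_hexagonLift (by norm_num) (by norm_num) (by norm_num)
end
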